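/- A curve γ satisfies the closed-loop equation ∇̂_{γ̇}γ̇ + ĉ(γ̇) + grad̂_γ V̂ = 0 and the open-loop equation ∇_{γ̇}γ̇ + c(γ̇) + grad_γ V = f(γ̇) simultaneously for all initial conditions (with P(f)=0) if and only if the matching conditions hold: P(∇_X X − ∇̂_X X) = 0, P(grad V − grad̂ V̂) = 0, and P(c(X) − ĉ(X)) = 0 for all vector fields X, together with (1−P)-components determining f. -/
import Mathlib


open Matrix

/-- Partial derivative of a scalar field in direction i. -/
noncomputable def pd {n : ℕ} (i : Fin n) (f : (Fin n → ℝ) → ℝ) (q : Fin n → ℝ) : ℝ :=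
  fderiv ℝ f q (Pi.single i 1)

/-- Christoffel symbols Γ^k_{ij} of the Levi-Civita connection of g. -/
noncomputable def christoffel {n : ℕ} (g : (Fin n → ℝ) → Matrix (Fin n) (Fin n) ℝ)
    (q : Fin n → ℝ) (k i j : Fin n) : ℝ :=
  (1/2) * ∑ l, (g q)⁻¹ k l *
    (pd i (fun p => g p j l) q + pd j (fun p => g p i l) q - pd l (fun p => g p i j) q)

/-- The g-gradient of V. -/
noncomputable def grad {n : ℕ} (g : (Fin n → ℝ) → Matrix (Fin n) (Fin n) ℝ)
    (V : (Fin n → ℝ) → ℝ) (q : Fin n → ℝ) : Fin n → ℝ :=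
  fun k => ∑ l, (g q)⁻¹ k l * pd l V q

/-- Covariant acceleration ∇_{γ̇}γ̇ of a curve, in coordinates. -/
noncomputable def covAccel {n : ℕ} (g : (Fin n → ℝ) → Matrix (Fin n) (Fin n) ℝ)
    (γ : ℝ → Fin n → ℝ) (t : ℝ) : Fin n → ℝ :=
  fun k => deriv (fun τ => deriv (fun τ' => γ τ' k) τ) t
    + ∑ i, ∑ j, christoffel g (γ t) k i j
        * deriv (fun τ => γ τ i) t * deriv (fun τ => γ τ j) t

/-- The matching condition: a curve solving the closed-loop equation
∇̂_{γ̇}γ̇ + ĉ(γ̇) + grad̂ V̂ = 0 also solves the open-loop equation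
∇_{γ̇}γ̇ + c(γ̇) + grad V = f(γ̇) with a control f satisfying P(f) = 0,
for all initial conditions, iff P(∇_X X − ∇̂_X X) = 0,
P(grad V − grad̂ V̂) = 0 and P(c(X) − ĉ(X)) = 0; f is then determined by its
(1−P)-component, namely the difference of the two sides. -/
theorem stmt_1 {n : ℕ} (g ghat : (Fin n → ℝ) → Matrix (Fin n) (Fin n) ℝ)
    (hgsmooth : ∀ i j, ContDiff ℝ (⊤ : ℕ∞) (fun q => g q i j))
    (hghatsmooth : ∀ i j, ContDiff ℝ (⊤ : ℕ∞) (fun q => ghat q i j))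
    (hgsym : ∀ q, (g q).IsSymm) (hghatsym : ∀ q, (ghat q).IsSymm)
    (hgpos : ∀ q, (g q).PosDef) (hghatpos : ∀ q, (ghat q).PosDef)
    (V Vhat : (Fin n → ℝ) → ℝ) (hV : ContDiff ℝ (⊤ : ℕ∞) V) (hVhat : ContDiff ℝ (⊤ : ℕ∞) Vhat)
    (c chat : (Fin n → ℝ) → (Fin n → ℝ) → Fin n → ℝ)
    (hcodd : ∀ q v, c q (-v) = -c q v) (hchatodd : ∀ q v, chat q (-v) = -chat q v)
    (P : (Fin n → ℝ) → Matrix (Fin n) (Fin n) ℝ)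
    (hPproj : ∀ q, P q * P q = P q)
    (hPsym : ∀ q X Y, (P q *ᵥ X) ⬝ᵥ (g q *ᵥ Y) = X ⬝ᵥ (g q *ᵥ (P q *ᵥ Y))) :
    -- every closed-loop curve solves the open-loop equation with control
    -- f(γ̇) := (open-loop LHS) − (closed-loop LHS), and P(f) = 0 ...
    (∀ γ : ℝ → Fin n → ℝ, ContDiff ℝ (⊤ : ℕ∞) γ → ∀ t,
      P (γ t) *ᵥ (fun k =>
        (covAccel g γ t k + c (γ t) (fun i => deriv (fun τ => γ τ i) t) k
          + grad g V (γ t) k)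
        - (covAccel ghat γ t k + chat (γ t) (fun i => deriv (fun τ => γ τ i) t) k
          + grad ghat Vhat (γ t) k)) = 0) ↔
    -- ... iff the matching conditions hold.
    ((∀ q v : Fin n → ℝ,
        P q *ᵥ (fun k => ∑ i, ∑ j,
          (christoffel g q k i j - christoffel ghat q k i j) * v i * v j) = 0) ∧
      (∀ q : Fin n → ℝ, P q *ᵥ (fun k => grad g V q k - grad ghat Vhat q k) = 0) ∧
      (∀ q v : Fin n → ℝ, P q *ᵥ (fun k => c q v k - chat q v k) = 0)) := by
  -- abbreviations for the three difference vectors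
  set vΓ : (Fin n → ℝ) → (Fin n → ℝ) → (Fin n → ℝ) := fun q v k =>
    ∑ i, ∑ j, (christoffel g q k i j - christoffel ghat q k i j) * v i * v j with hvΓ
  set vc : (Fin n → ℝ) → (Fin n → ℝ) → (Fin n → ℝ) := fun q v k =>
    c q v k - chat q v k with hvc
  set vg : (Fin n → ℝ) → (Fin n → ℝ) := fun q k =>
    grad g V q k - grad ghat Vhat q k with hvg
  constructor
  · intro h
    -- evaluate h on affine curves γ τ = q + τ v at t = 0
    have key : ∀ q v : Fin n → ℝ,
        P q *ᵥ vΓ q v + P q *ᵥ vc q v + P q *ᵥ vg q = 0 := by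
      intro q v
      have hγ : ContDiff ℝ (⊤ : ℕ∞) (fun τ : ℝ => fun i => q i + τ * v i) :=
        contDiff_pi.mpr fun i => contDiff_const.add (contDiff_id.mul contDiff_const)
      have h0 := h (fun τ i => q i + τ * v i) hγ 0
      have hd : ∀ i : Fin n, (fun τ : ℝ => deriv (fun τ' => q i + τ' * v i) τ)
          = fun _ => v i := by
        intro i; funext τ; simp [deriv_const_add]
      have hq : (fun i => q i + (0:ℝ) * v i) = q := by funext i; simp
      rw [hq] at h0
      have hca : ∀ gg : (Fin n → ℝ) → Matrix (Fin n) (Fin n) ℝ,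
          covAccel gg (fun τ i => q i + τ * v i) 0
            = fun k => ∑ i, ∑ j, christoffel gg q k i j * v i * v j := by
        intro gg
        funext k
        simp only [covAccel]
        rw [hd k]
        simp only [deriv_const, zero_add]
        rw [hq]
        simp [deriv_const_add]
      have hd' : (fun i => deriv (fun τ : ℝ => q i + τ * v i) 0) = v := by
        funext i; simp [deriv_const_add]
      rw [hca g, hca ghat, hd'] at h0
      have hvec : (fun k =>
          ((∑ i, ∑ j, christoffel g q k i j * v i * v j) + c q v k + grad g V q k)
          - ((∑ i, ∑ j, christoffel ghat q k i j * v i * v j) + chat q v k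
            + grad ghat Vhat q k))
          = vΓ q v + vc q v + vg q := by
        funext k
        simp only [Pi.add_apply, hvΓ, hvc, hvg, sub_mul, Finset.sum_sub_distrib]
        ring
      rw [hvec, Matrix.mulVec_add, Matrix.mulVec_add] at h0
      exact h0
    -- special values
    have hΓ0 : ∀ q : Fin n → ℝ, vΓ q 0 = 0 := by
      intro q; funext k; simp [hvΓ]
    have hc0 : ∀ q : Fin n → ℝ, vc q 0 = 0 := by
      intro q; funext k
      have h1 := congrFun (hcodd q 0) k
      have h2 := congrFun (hchatodd q 0) k
      simp only [neg_zero, Pi.neg_apply] at h1 h2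
      simp only [hvc, Pi.zero_apply]
      linarith
    have hΓeven : ∀ q v : Fin n → ℝ, vΓ q (-v) = vΓ q v := by
      intro q v; funext k
      simp only [hvΓ, Pi.neg_apply, mul_neg, neg_mul, neg_neg]
    have hcneg : ∀ q v : Fin n → ℝ, vc q (-v) = -(vc q v) := by
      intro q v; funext k
      simp only [hvc, hcodd, hchatodd, Pi.neg_apply]
      ring
    -- P vg = 0
    have hg0 : ∀ q : Fin n → ℝ, P q *ᵥ vg q = 0 := by
      intro q
      have := key q 0
      rw [hΓ0, hc0] at this
      simpa using this
    refine ⟨?_, hg0, ?_⟩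
    · intro q v
      have k1 := key q v
      have k2 := key q (-v)
      rw [hΓeven, hcneg, Matrix.mulVec_neg, hg0] at k2
      rw [hg0] at k1
      funext k
      have e1 := congrFun k1 k
      have e2 := congrFun k2 k
      simp only [Pi.add_apply, Pi.neg_apply, Pi.zero_apply, add_zero] at e1 e2 ⊢
      linarith
    · intro q v
      have k1 := key q v
      have k2 := key q (-v)
      rw [hΓeven, hcneg, Matrix.mulVec_neg, hg0] at k2
      rw [hg0] at k1
      funext k
      have e1 := congrFun k1 k
      have e2 := congrFun k2 k
      simp only [Pi.add_apply, Pi.neg_apply, Pi.zero_apply, add_zero] at e1 e2 ⊢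
      linarith
  · rintro ⟨h1, h2, h3⟩ γ hγ t
    set v : Fin n → ℝ := fun i => deriv (fun τ => γ τ i) t with hv
    have hvec : (fun k =>
        (covAccel g γ t k + c (γ t) v k + grad g V (γ t) k)
        - (covAccel ghat γ t k + chat (γ t) v k + grad ghat Vhat (γ t) k))
        = vΓ (γ t) v + vc (γ t) v + vg (γ t) := by
      funext k
      simp only [Pi.add_apply, hvΓ, hvc, hvg, covAccel, sub_mul, Finset.sum_sub_distrib]
      ring
    rw [hvec, Matrix.mulVec_add, Matrix.mulVec_add, h1, h2, h3]
    simp
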